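/- Let P be a locally finite partially ordered set with a weak rank function r. If f and g in the incidence algebra of P over ℤ[t] satisfy deg(f x y) ≤ r x y and deg(g x y) ≤ r x y for all x ≤ y, then every entry of the convolution product satisfies deg((f*g) x y) ≤ r x y, and \overline{f*g} = \bar f * \bar g; that is, for all x ≤ z, Polynomial.reflect (r x z) ((f*g) x z) = Σ_{x ≤ y ≤ z} Polynomial.reflect (r x y) (f x y) · Polynomial.reflect (r y z) (g y z). -/

import Mathlib

/-! Reflection at degree `F + G` is additive and, on polynomials of degrees at most `F` and `G`,
multiplicative (`Polynomial.reflect_mul`). Since `r x y + r y z = r x z` along every chain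
`x ≤ y ≤ z`, it therefore passes through each term `f x y * g y z` of the convolution sum. -/

open Finset Polynomial

/-- The bar involution on the incidence algebra of `P` over `ℤ[t]` relative to a weak rank
function `r`: it sends `f` to the function `x y ↦ t^(r x y) · (f x y)(t⁻¹)`, i.e. the
reflection of `f x y` at degree `r x y`. -/
noncomputable def IncidenceAlgebra.bar {P : Type*} [PartialOrder P] [LocallyFiniteOrder P]
    (r : P → P → ℕ) (f : IncidenceAlgebra (Polynomial ℤ) P) :
    IncidenceAlgebra (Polynomial ℤ) P :=
  ⟨fun x y => (f x y).reflect (r x y), fun x y h => by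
    try simp only []
    rw [IncidenceAlgebra.apply_eq_zero_of_not_le h, Polynomial.reflect_zero]⟩

theorem Polynomial.reflect_sum {R ι : Type*} [Semiring R] (N : ℕ) (s : Finset ι)
    (F : ι → R[X]) : (∑ i ∈ s, F i).reflect N = ∑ i ∈ s, (F i).reflect N := by
  ext n
  simp only [coeff_reflect, finsetSum_coeff]

namespace IncidenceAlgebra

variable {R P : Type*} [Semiring R] [Preorder P] [LocallyFiniteOrder P] {r : P → P → ℕ}
  {f g : IncidenceAlgebra R[X] P}

theorem natDegree_mul_apply_le (hr : ∀ x y z, x ≤ y → y ≤ z → r x y + r y z = r x z)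
    (hf : ∀ x y, x ≤ y → (f x y).natDegree ≤ r x y)
    (hg : ∀ x y, x ≤ y → (g x y).natDegree ≤ r x y) (x z : P) :
    ((f * g) x z).natDegree ≤ r x z := by
  rw [mul_apply]
  refine natDegree_sum_le_of_forall_le _ _ fun y hy => ?_
  obtain ⟨hxy, hyz⟩ := mem_Icc.1 hy
  calc (f x y * g y z).natDegree ≤ (f x y).natDegree + (g y z).natDegree := natDegree_mul_le
    _ ≤ r x y + r y z := add_le_add (hf x y hxy) (hg y z hyz)
    _ = r x z := hr x y z hxy hyz

theorem reflect_mul_apply (hr : ∀ x y z, x ≤ y → y ≤ z → r x y + r y z = r x z)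
    (hf : ∀ x y, x ≤ y → (f x y).natDegree ≤ r x y)
    (hg : ∀ x y, x ≤ y → (g x y).natDegree ≤ r x y) (x z : P) :
    ((f * g) x z).reflect (r x z) =
      ∑ y ∈ Icc x z, (f x y).reflect (r x y) * (g y z).reflect (r y z) := by
  rw [mul_apply, reflect_sum]
  refine sum_congr rfl fun y hy => ?_
  obtain ⟨hxy, hyz⟩ := mem_Icc.1 hy
  rw [← hr x y z hxy hyz, reflect_mul _ _ (hf x y hxy) (hg y z hyz)]

end IncidenceAlgebra

theorem bar_mul_general {P : Type*} [PartialOrder P] [LocallyFiniteOrder P]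
    (r : P → P → ℕ)
    (hr_add : ∀ x y z : P, x ≤ y → y ≤ z → r x y + r y z = r x z)
    (f g : IncidenceAlgebra (Polynomial ℤ) P)
    (hf : ∀ x y : P, x ≤ y → (f x y).natDegree ≤ r x y)
    (hg : ∀ x y : P, x ≤ y → (g x y).natDegree ≤ r x y) :
    (∀ x y : P, x ≤ y → ((f * g) x y).natDegree ≤ r x y) ∧
      IncidenceAlgebra.bar r (f * g) = IncidenceAlgebra.bar r f * IncidenceAlgebra.bar r g ∧
      ∀ x z : P, x ≤ z →
        ((f * g) x z).reflect (r x z) =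
          ∑ y ∈ Finset.Icc x z, (f x y).reflect (r x y) * (g y z).reflect (r y z) := by
  have hreflect := IncidenceAlgebra.reflect_mul_apply hr_add hf hg
  refine ⟨fun x y _ => IncidenceAlgebra.natDegree_mul_apply_le hr_add hf hg x y, ?_,
    fun x z _ => hreflect x z⟩
  exact IncidenceAlgebra.ext fun x z _ => hreflect x z

/-- If `f` and `g` in the incidence algebra of `P` over `ℤ[t]` satisfy the degree bound
`deg (f x y) ≤ r x y` (resp. for `g`) for a weak rank function `r`, then so does `f * g`,
and the bar involution is multiplicative: `overline{f * g} = f̄ * ḡ`. -/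
theorem bar_mul {P : Type*} [PartialOrder P] [LocallyFiniteOrder P]
    [DecidableEq P] (r : P → P → ℕ)
    (hr_pos : ∀ x y : P, x < y → 0 < r x y)
    (hr_add : ∀ x y z : P, x ≤ y → y ≤ z → r x y + r y z = r x z)
    (f g : IncidenceAlgebra (Polynomial ℤ) P)
    (hf : ∀ x y : P, x ≤ y → (f x y).natDegree ≤ r x y)
    (hg : ∀ x y : P, x ≤ y → (g x y).natDegree ≤ r x y) :
    (∀ x y : P, x ≤ y → ((f * g) x y).natDegree ≤ r x y) ∧
      IncidenceAlgebra.bar r (f * g) = IncidenceAlgebra.bar r f * IncidenceAlgebra.bar r g ∧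
      ∀ x z : P, x ≤ z →
        ((f * g) x z).reflect (r x z) =
          ∑ y ∈ Finset.Icc x z, (f x y).reflect (r x y) * (g y z).reflect (r y z) :=
  bar_mul_general r hr_add f g hf hg
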